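/- Let g_ε, g : W → ℝ, for ε > 0, where W ⊂ ℝ² is bounded and open, and suppose there exist κ_ε > 0 with κ_ε → 0, κ_ε > ‖g_ε − g‖_{L^∞(W)}, and ‖D^β(g_ε − g)‖_{L^∞(W)} / κ_ε^{3/2 − |β|} → 0 as ε → 0 for all multi-indices β with |β| ≤ 2. Define ĝ_ε = g_ε − 6κ_ε and h_ε(x̄, x₃) = (g_ε(x̄) − g(x̄)) ((x₃ − ĝ_ε(x̄))/(6κ_ε))³ for ĝ_ε(x̄) < x₃ ≤ g_ε(x̄). Then for every multi-index α with |α| ≤ 2, sup |D^α h_ε| ≤ c Σ_{0 ≤ γ ≤ α} ‖D^γ(g_ε − g)‖_∞ / κ_ε^{|α|−|γ|} for a constant c independent of ε; in particular every second-order derivative of h_ε is o(κ_ε^{−1/2}) as ε → 0. -/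

import Mathlib

open MeasureTheory Filter

/-- Partial derivative of a scalar function on `ℝ³` in direction `i`. -/
noncomputable def pd3 (i : Fin 3) (f : (Fin 3 → ℝ) → ℝ) : (Fin 3 → ℝ) → ℝ :=
  fun x => fderiv ℝ f x (Pi.single i 1)

/-- Iterated partial derivative `D^L` along a list of directions. -/
noncomputable def pdList : List (Fin 3) → ((Fin 3 → ℝ) → ℝ) → ((Fin 3 → ℝ) → ℝ)
  | [], f => f
  | i :: l, f => pd3 i (pdList l f)

/-- Projection of `x ∈ ℝ³` to its first two coordinates `x̄ ∈ ℝ²`. -/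
def proj2 (x : Fin 3 → ℝ) : Fin 2 → ℝ := fun j => x j.castSucc

/-- Embedding of `x̄ ∈ ℝ²` into `ℝ³` with vanishing third coordinate. -/
def lift2 (p : Fin 2 → ℝ) : Fin 3 → ℝ := fun i => if h : (i : ℕ) < 2 then p ⟨i, h⟩ else 0

/-!
Write `h_ε = u q³` with `u = g_ε - g` and `q = (x₃ - ĝ_ε) / (6κ_ε)`, so that `0 ≤ q ≤ 1` on the
strip. Up to the constant `∂₃x₃ = 1`, every derivative of `q` is a derivative of `g_ε = g + u`
divided by `-6κ_ε`; the first derivatives of `g_ε` stay bounded because `D u = o(κ_ε^{1/2})`.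
Expanding `D^α (u q³)` by the Leibniz rule, each term is a derivative `D^γ u` times at most
`|α| - |γ|` factors `O(1/κ_ε)`, except `u · D²g_ε / κ_ε`, whose part `u · D²u / κ_ε` is absorbed
by `|u| < κ_ε`. Multiplying the second-order bound by `√κ_ε` turns its summands into
`‖D^γ u‖ / κ_ε^{3/2 - |γ|} → 0`.
-/

section PartialDerivatives

variable {f g : (Fin 3 → ℝ) → ℝ}

theorem ContDiff.pd3 {n : ℕ} (hf : ContDiff ℝ (n + 1 : ℕ) f) (i : Fin 3) :
    ContDiff ℝ n (pd3 i f) :=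
  (ContinuousLinearMap.apply ℝ ℝ (Pi.single i 1 : Fin 3 → ℝ)).contDiff.comp
    (hf.fderiv_right (by norm_cast))

theorem ContDiff.pdList {n : ℕ} {L : List (Fin 3)} (hf : ContDiff ℝ (n + L.length : ℕ) f) :
    ContDiff ℝ n (pdList L f) := by
  induction L generalizing n with
  | nil => exact hf
  | cons i L ih => exact (ih (n := n + 1) (by rwa [add_right_comm])).pd3 i

theorem pd3_add (hf : Differentiable ℝ f) (hg : Differentiable ℝ g) (i : Fin 3) :
    pd3 i (fun x => f x + g x) = fun x => pd3 i f x + pd3 i g x := by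
  ext x
  simp [pd3, fderiv_fun_add (hf x) (hg x)]

theorem pd3_sub (hf : Differentiable ℝ f) (hg : Differentiable ℝ g) (i : Fin 3) :
    pd3 i (fun x => f x - g x) = fun x => pd3 i f x - pd3 i g x := by
  ext x
  simp [pd3, fderiv_fun_sub (hf x) (hg x)]

theorem pd3_mul (hf : Differentiable ℝ f) (hg : Differentiable ℝ g) (i : Fin 3) :
    pd3 i (fun x => f x * g x) = fun x => f x * pd3 i g x + g x * pd3 i f x := by
  ext x
  simp [pd3, fderiv_fun_mul (hf x) (hg x)]

theorem pd3_div_const (hf : Differentiable ℝ f) (c : ℝ) (i : Fin 3) :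
    pd3 i (fun x => f x / c) = fun x => pd3 i f x / c := by
  ext x
  simp [pd3, div_eq_mul_inv, fderiv_mul_const (hf x), mul_comm]

theorem pd3_pow (hf : Differentiable ℝ f) (n : ℕ) (i : Fin 3) :
    pd3 i (fun x => f x ^ n) = fun x => n * f x ^ (n - 1) * pd3 i f x := by
  ext x
  simp [pd3, fderiv_fun_pow n (hf x)]

theorem pd3_const (c : ℝ) (i : Fin 3) : pd3 i (fun _ => c) = fun _ => 0 := by
  ext x
  simp [pd3]

theorem pd3_apply (i j : Fin 3) :
    pd3 i (fun x => x j) = fun _ => (Pi.single i 1 : Fin 3 → ℝ) j := by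
  ext x
  simp [pd3, (hasFDerivAt_apply (𝕜 := ℝ) j x).fderiv]

theorem pdList_add {n : ℕ} {L : List (Fin 3)} (hf : ContDiff ℝ n f) (hg : ContDiff ℝ n g)
    (hL : L.length ≤ n) :
    pdList L (fun x => f x + g x) = fun x => pdList L f x + pdList L g x := by
  induction L generalizing n with
  | nil => rfl
  | cons i L ih =>
    obtain ⟨m, rfl⟩ : ∃ m, n = m + 1 + L.length := ⟨n - 1 - L.length, by simp at hL; omega⟩
    have hd (φ : (Fin 3 → ℝ) → ℝ) (hφ : ContDiff ℝ (m + 1 + L.length : ℕ) φ) :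
        Differentiable ℝ (pdList L φ) :=
      (ContDiff.pdList hφ).differentiable (by simp)
    change pd3 i _ = _
    rw [ih hf hg (by omega)]
    exact pd3_add (hd f hf) (hd g hg) i

end PartialDerivatives

section Cylindrical

noncomputable def proj2L : (Fin 3 → ℝ) →L[ℝ] (Fin 2 → ℝ) :=
  ContinuousLinearMap.pi fun j => ContinuousLinearMap.proj j.castSucc

theorem proj2_lift2 (p : Fin 2 → ℝ) : proj2 (lift2 p) = p := by
  ext j
  fin_cases j <;> rfl

theorem exists_pdList_comp_proj2 {φ : (Fin 2 → ℝ) → ℝ} {n : ℕ} {L : List (Fin 3)}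
    (hφ : ContDiff ℝ (L.length + n : ℕ) φ) :
    ∃ ψ : (Fin 2 → ℝ) → ℝ, ContDiff ℝ n ψ ∧
      pdList L (fun x => φ (proj2 x)) = fun x => ψ (proj2 x) := by
  induction L generalizing n with
  | nil => exact ⟨φ, by simpa using hφ, rfl⟩
  | cons i L ih =>
    obtain ⟨ψ, hψ, heq⟩ := ih (n := n + 1) (by simpa [add_assoc, add_comm 1] using hφ)
    refine ⟨fun p => fderiv ℝ ψ p (proj2 (Pi.single i 1)),
      (ContinuousLinearMap.apply ℝ ℝ _).contDiff.comp (hψ.fderiv_right (by norm_cast)), ?_⟩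
    ext x
    have hψx : HasFDerivAt (fun x => ψ (proj2 x)) ((fderiv ℝ ψ (proj2 x)).comp proj2L) x :=
      (hψ.differentiable (by simp)).differentiableAt.hasFDerivAt.comp x proj2L.hasFDerivAt
    simp only [pdList, heq, pd3, hψx.fderiv]
    rfl

variable {W : Set (Fin 2 → ℝ)} {φ : (Fin 2 → ℝ) → ℝ} {n : ℕ} {L : List (Fin 3)}

theorem pdList_comp_proj2_lift2_proj2 (hφ : ContDiff ℝ L.length φ) (x : Fin 3 → ℝ) :
    pdList L (fun x => φ (proj2 x)) (lift2 (proj2 x)) = pdList L (fun x => φ (proj2 x)) x := by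
  obtain ⟨ψ, -, heq⟩ := exists_pdList_comp_proj2 (n := 0) hφ
  simp [heq, proj2_lift2]

theorem exists_abs_pdList_comp_proj2_le (hW : Bornology.IsBounded W) (hφ : ContDiff ℝ n φ)
    (hL : L.length ≤ n) :
    ∃ C, ∀ x, proj2 x ∈ W → |pdList L (fun x => φ (proj2 x)) x| ≤ C := by
  obtain ⟨ψ, hψ, heq⟩ := exists_pdList_comp_proj2 (n := 0) (hφ.of_le (by exact_mod_cast hL))
  obtain ⟨C, hC⟩ :=
    hW.isCompact_closure.exists_bound_of_continuousOn hψ.continuous.continuousOn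
  exact ⟨C, fun x hx => by simpa [heq] using hC _ (subset_closure hx)⟩

theorem exists_forall_abs_pdList_comp_proj2_le (hW : Bornology.IsBounded W)
    (hφ : ContDiff ℝ n φ) :
    ∃ M, 0 ≤ M ∧ ∀ L : List (Fin 3), L.length ≤ n → ∀ x, proj2 x ∈ W →
      |pdList L (fun x => φ (proj2 x)) x| ≤ M := by
  choose C hC using fun L : {L : List (Fin 3) // L.length ≤ n} =>
    exists_abs_pdList_comp_proj2_le hW hφ L.2
  have : Finite {L : List (Fin 3) // L.length ≤ n} := (List.finite_length_le _ n).to_subtype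
  obtain ⟨M, hM⟩ := (Set.finite_range C).bddAbove
  exact ⟨max M 0, le_max_right _ _,
    fun L hL x hx => (hC ⟨L, hL⟩ x hx).trans ((hM ⟨_, rfl⟩).trans (le_max_left _ _))⟩

theorem abs_pdList_comp_proj2_le_iSup (hW : Bornology.IsBounded W) (hφ : ContDiff ℝ n φ)
    (hL : L.length ≤ n) {x : Fin 3 → ℝ} (hx : proj2 x ∈ W) :
    |pdList L (fun x => φ (proj2 x)) x| ≤
      ⨆ p : W, |pdList L (fun x => φ (proj2 x)) (lift2 p)| := by
  obtain ⟨C, hC⟩ := exists_abs_pdList_comp_proj2_le hW hφ hL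
  have hbdd : BddAbove (Set.range fun p : W => |pdList L (fun x => φ (proj2 x)) (lift2 p)|) :=
    ⟨C, Set.forall_mem_range.2 fun p => hC _ (by simp [proj2_lift2])⟩
  rw [← pdList_comp_proj2_lift2_proj2 (hφ.of_le (by exact_mod_cast hL))]
  exact le_ciSup hbdd (⟨proj2 x, hx⟩ : W)

end Cylindrical

section Leibniz

variable {u q : (Fin 3 → ℝ) → ℝ}

theorem pd3_mul_pow_three (hu : Differentiable ℝ u) (hq : Differentiable ℝ q) (i : Fin 3) :
    pd3 i (fun x => u x * q x ^ 3) =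
      fun x => q x ^ 2 * (3 * u x * pd3 i q x) + q x ^ 3 * pd3 i u x := by
  rw [pd3_mul hu (hq.fun_pow 3), pd3_pow hq]
  ext x
  push_cast
  ring

theorem pd3_pd3_mul_pow_three (hu : ContDiff ℝ 2 u) (hq : ContDiff ℝ 2 q) (i j : Fin 3) :
    pd3 i (pd3 j (fun x => u x * q x ^ 3)) = fun x =>
      q x ^ 2 * (3 * u x * pd3 i (pd3 j q) x) + q x * (6 * u x * pd3 i q x * pd3 j q x) +
        q x ^ 2 * (3 * pd3 i u x * pd3 j q x) + q x ^ 2 * (3 * pd3 j u x * pd3 i q x) +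
        q x ^ 3 * pd3 i (pd3 j u) x := by
  have du : Differentiable ℝ u := hu.differentiable (by simp)
  have dq : Differentiable ℝ q := hq.differentiable (by simp)
  have dju : Differentiable ℝ (pd3 j u) := (hu.pd3 (n := 1) j).differentiable (by simp)
  have djq : Differentiable ℝ (pd3 j q) := (hq.pd3 (n := 1) j).differentiable (by simp)
  have d3u : Differentiable ℝ (fun x => 3 * u x) := (differentiable_const _).fun_mul du
  rw [pd3_mul_pow_three du dq, pd3_add ((dq.fun_pow 2).fun_mul (d3u.fun_mul djq))
      ((dq.fun_pow 3).fun_mul dju), pd3_mul (dq.fun_pow 2) (d3u.fun_mul djq), pd3_mul d3u djq,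
    pd3_mul (differentiable_const _) du, pd3_const, pd3_mul (dq.fun_pow 3) dju, pd3_pow dq,
    pd3_pow dq]
  ext x
  push_cast
  ring

end Leibniz

theorem abs_pow_mul_le_abs {q : ℝ} (hq : |q| ≤ 1) (n : ℕ) (a : ℝ) : |q ^ n * a| ≤ |a| := by
  rw [abs_mul, abs_pow]
  exact mul_le_of_le_one_left (abs_nonneg a) (pow_le_one₀ (abs_nonneg q) hq)

section LeibnizBounds

variable {u q : (Fin 3 → ℝ) → ℝ} {x : Fin 3 → ℝ}

theorem abs_pd3_mul_pow_three_le (hu : Differentiable ℝ u) (hq : Differentiable ℝ q)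
    (hqx : |q x| ≤ 1) (i : Fin 3) :
    |pd3 i (fun x => u x * q x ^ 3) x| ≤ 3 * |u x| * |pd3 i q x| + |pd3 i u x| := by
  have h₁ := abs_le.1 (abs_pow_mul_le_abs hqx 2 (3 * u x * pd3 i q x))
  have h₂ := abs_le.1 (abs_pow_mul_le_abs hqx 3 (pd3 i u x))
  simp only [abs_mul, abs_of_pos (by norm_num : (0:ℝ) < 3)] at h₁ h₂
  rw [pd3_mul_pow_three hu hq, abs_le]
  dsimp only
  constructor <;> linarith

theorem abs_pd3_pd3_mul_pow_three_le (hu : ContDiff ℝ 2 u) (hq : ContDiff ℝ 2 q)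
    (hqx : |q x| ≤ 1) (i j : Fin 3) :
    |pd3 i (pd3 j (fun x => u x * q x ^ 3)) x| ≤
      3 * |u x| * |pd3 i (pd3 j q) x| + 6 * |u x| * |pd3 i q x| * |pd3 j q x| +
        3 * |pd3 i u x| * |pd3 j q x| + 3 * |pd3 j u x| * |pd3 i q x| +
        |pd3 i (pd3 j u) x| := by
  have h₁ := abs_le.1 (abs_pow_mul_le_abs hqx 2 (3 * u x * pd3 i (pd3 j q) x))
  have h₂ := abs_le.1 (abs_pow_mul_le_abs hqx 1 (6 * u x * pd3 i q x * pd3 j q x))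
  have h₃ := abs_le.1 (abs_pow_mul_le_abs hqx 2 (3 * pd3 i u x * pd3 j q x))
  have h₄ := abs_le.1 (abs_pow_mul_le_abs hqx 2 (3 * pd3 j u x * pd3 i q x))
  have h₅ := abs_le.1 (abs_pow_mul_le_abs hqx 3 (pd3 i (pd3 j u) x))
  simp only [abs_mul, abs_of_pos (by norm_num : (0:ℝ) < 3),
    abs_of_pos (by norm_num : (0:ℝ) < 6), pow_one] at h₁ h₂ h₃ h₄ h₅
  rw [pd3_pd3_mul_pow_three hu hq, abs_le]
  dsimp only
  constructor <;> linarith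

end LeibnizBounds

section StripCoord

/-- The paper's `(x₃ - ĝ_ε) / (6κ_ε)` is `stripCoord g_ε (6κ_ε)`. -/
noncomputable def stripCoord (a : (Fin 3 → ℝ) → ℝ) (k : ℝ) (x : Fin 3 → ℝ) : ℝ :=
  (x 2 - (a x - k)) / k

variable {a : (Fin 3 → ℝ) → ℝ} {k : ℝ} {x : Fin 3 → ℝ}

theorem abs_stripCoord_le_one (hk : 0 < k) (h₁ : a x - k ≤ x 2) (h₂ : x 2 ≤ a x) :
    |stripCoord a k x| ≤ 1 := by
  rw [stripCoord, abs_le, le_div_iff₀ hk, div_le_iff₀ hk]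
  constructor <;> linarith

theorem ContDiff.stripCoord {n : ℕ} (ha : ContDiff ℝ n a) : ContDiff ℝ n (stripCoord a k) :=
  ((contDiff_apply ℝ ℝ 2).sub (ha.sub contDiff_const)).div_const k

theorem pd3_stripCoord (ha : Differentiable ℝ a) (i : Fin 3) :
    pd3 i (stripCoord a k) = fun x => ((Pi.single i 1 : Fin 3 → ℝ) 2 - pd3 i a x) / k := by
  have hc : Differentiable ℝ (fun x : Fin 3 → ℝ => x 2) := differentiable_apply 2
  change pd3 i (fun x => (x 2 - (a x - k)) / k) = _
  rw [pd3_div_const (hc.fun_sub (ha.sub_const k)), pd3_sub hc (ha.sub_const k),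
    pd3_sub ha (differentiable_const k), pd3_apply, pd3_const]
  simp

theorem pd3_pd3_stripCoord (ha : ContDiff ℝ 2 a) (i j : Fin 3) :
    pd3 i (pd3 j (stripCoord a k)) = fun x => -pd3 i (pd3 j a) x / k := by
  have hja : Differentiable ℝ (pd3 j a) := (ha.pd3 (n := 1) j).differentiable (by simp)
  rw [pd3_stripCoord (ha.differentiable (by simp)),
    pd3_div_const ((differentiable_const _).fun_sub hja), pd3_sub (differentiable_const _) hja,
    pd3_const]
  simp

theorem abs_pd3_stripCoord_le (ha : Differentiable ℝ a) (hk : 0 < k) (i : Fin 3) :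
    |pd3 i (stripCoord a k) x| ≤ (1 + |pd3 i a x|) / k := by
  rw [pd3_stripCoord ha, abs_div, abs_of_pos hk]
  gcongr
  refine (abs_sub _ _).trans (add_le_add_left ?_ _)
  rw [Pi.single_apply]
  split_ifs <;> simp

theorem abs_pd3_pd3_stripCoord (ha : ContDiff ℝ 2 a) (hk : 0 < k) (i j : Fin 3) :
    |pd3 i (pd3 j (stripCoord a k)) x| = |pd3 i (pd3 j a) x| / k := by
  rw [pd3_pd3_stripCoord ha, abs_div, abs_neg, abs_of_pos hk]

variable {b u : (Fin 3 → ℝ) → ℝ} {M s : ℝ}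

theorem abs_pd3_stripCoord_add_le (hb : ContDiff ℝ 2 b) (hu : ContDiff ℝ 2 u) (hk : 0 < k)
    {i : Fin 3} (hbi : |pd3 i b x| ≤ M) (hui : |pd3 i u x| ≤ s) (hs : s ≤ 1) :
    |pd3 i (stripCoord (fun z => b z + u z) k) x| ≤ (2 + M) / k := by
  refine (abs_pd3_stripCoord_le ((hb.add hu).differentiable (by simp)) hk i).trans ?_
  have hadd : pd3 i (fun z => b z + u z) x = pd3 i b x + pd3 i u x :=
    congrFun (pdList_add (L := [i]) hb hu (by simp)) x
  rw [hadd]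
  exact div_le_div_of_nonneg_right (by linarith [abs_add_le (pd3 i b x) (pd3 i u x)]) hk.le

theorem abs_pd3_pd3_stripCoord_add_le (hb : ContDiff ℝ 2 b) (hu : ContDiff ℝ 2 u) (hk : 0 < k)
    {i j : Fin 3} (hbij : |pd3 i (pd3 j b) x| ≤ M) (huij : |pd3 i (pd3 j u) x| ≤ s) :
    |pd3 i (pd3 j (stripCoord (fun z => b z + u z) k)) x| ≤ (M + s) / k := by
  have hadd : pd3 i (pd3 j (fun z => b z + u z)) x = pd3 i (pd3 j b) x + pd3 i (pd3 j u) x :=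
    congrFun (pdList_add (L := [i, j]) hb hu (by simp)) x
  rw [abs_pd3_pd3_stripCoord (hb.add hu) hk, hadd]
  gcongr
  exact (abs_add_le _ _).trans (add_le_add hbij huij)

end StripCoord

theorem first_order_le {κ M s₀ sᵢ u₀ uᵢ qᵢ : ℝ} (hκ : 0 < κ) (hM : 0 ≤ M) (hu₀ : |u₀| ≤ s₀)
    (huᵢ : |uᵢ| ≤ sᵢ) (hqᵢ : |qᵢ| ≤ (2 + M) / (6 * κ)) :
    3 * |u₀| * |qᵢ| + |uᵢ| ≤ (2 + M) ^ 2 * (s₀ / κ + sᵢ) := by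
  have h₀ : 0 ≤ s₀ := (abs_nonneg _).trans hu₀
  have hᵢ : 0 ≤ sᵢ := (abs_nonneg _).trans huᵢ
  have ht₀ : 0 ≤ s₀ / κ := div_nonneg h₀ hκ.le
  have e : 3 * s₀ * ((2 + M) / (6 * κ)) = (2 + M) / 2 * (s₀ / κ) := by
    field_simp
    ring
  calc 3 * |u₀| * |qᵢ| + |uᵢ| ≤ 3 * s₀ * ((2 + M) / (6 * κ)) + sᵢ := by gcongr
    _ ≤ _ := by
      rw [e]
      nlinarith [mul_nonneg hM ht₀, mul_nonneg (mul_nonneg hM hM) ht₀, mul_nonneg hM hᵢ]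

theorem second_order_le {κ M s₀ sᵢ sⱼ sᵢⱼ u₀ uᵢ uⱼ uᵢⱼ qᵢ qⱼ qᵢⱼ : ℝ} (hκ : 0 < κ)
    (hκ₁ : κ ≤ 1) (hM : 0 ≤ M) (hs₀ : s₀ ≤ κ) (hu₀ : |u₀| ≤ s₀) (huᵢ : |uᵢ| ≤ sᵢ)
    (huⱼ : |uⱼ| ≤ sⱼ) (huᵢⱼ : |uᵢⱼ| ≤ sᵢⱼ) (hqᵢ : |qᵢ| ≤ (2 + M) / (6 * κ))
    (hqⱼ : |qⱼ| ≤ (2 + M) / (6 * κ)) (hqᵢⱼ : |qᵢⱼ| ≤ (M + sᵢⱼ) / (6 * κ)) :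
    3 * |u₀| * |qᵢⱼ| + 6 * |u₀| * |qᵢ| * |qⱼ| + 3 * |uᵢ| * |qⱼ| + 3 * |uⱼ| * |qᵢ| + |uᵢⱼ| ≤
      (2 + M) ^ 2 * (s₀ / κ ^ 2 + sᵢ / κ + sⱼ / κ + sᵢⱼ) := by
  have h₀ : 0 ≤ s₀ := (abs_nonneg _).trans hu₀
  have hᵢ : 0 ≤ sᵢ := (abs_nonneg _).trans huᵢ
  have hⱼ : 0 ≤ sⱼ := (abs_nonneg _).trans huⱼ
  have hᵢⱼ : 0 ≤ sᵢⱼ := (abs_nonneg _).trans huᵢⱼ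
  have hA : 0 ≤ (2 + M) / (6 * κ) := by positivity
  have ht₀ : 0 ≤ s₀ / κ ^ 2 := by positivity
  have htᵢ : 0 ≤ sᵢ / κ := by positivity
  have htⱼ : 0 ≤ sⱼ / κ := by positivity
  have hr₁ : s₀ / κ ≤ 1 := (div_le_one hκ).2 hs₀
  have hr₂ : s₀ / κ ≤ s₀ / κ ^ 2 := div_le_div_of_nonneg_left h₀ (by positivity) (by nlinarith)
  have e : 3 * s₀ * ((M + sᵢⱼ) / (6 * κ)) +
        6 * s₀ * ((2 + M) / (6 * κ)) * ((2 + M) / (6 * κ)) +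
        3 * sᵢ * ((2 + M) / (6 * κ)) + 3 * sⱼ * ((2 + M) / (6 * κ)) + sᵢⱼ =
      M / 2 * (s₀ / κ) + s₀ / κ * sᵢⱼ / 2 + (2 + M) ^ 2 / 6 * (s₀ / κ ^ 2) +
        (2 + M) / 2 * (sᵢ / κ + sⱼ / κ) + sᵢⱼ := by
    field_simp
    ring
  calc _ ≤ 3 * s₀ * ((M + sᵢⱼ) / (6 * κ)) +
        6 * s₀ * ((2 + M) / (6 * κ)) * ((2 + M) / (6 * κ)) +
        3 * sᵢ * ((2 + M) / (6 * κ)) + 3 * sⱼ * ((2 + M) / (6 * κ)) + sᵢⱼ := by gcongr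
    _ ≤ _ := by
      rw [e]
      nlinarith [mul_le_mul_of_nonneg_left hr₂ hM, mul_le_mul_of_nonneg_right hr₁ hᵢⱼ,
        mul_nonneg hM ht₀, mul_nonneg (mul_nonneg hM hM) ht₀, mul_nonneg hM htᵢ,
        mul_nonneg (mul_nonneg hM hM) htᵢ, mul_nonneg hM htⱼ, mul_nonneg (mul_nonneg hM hM) htⱼ,
        mul_nonneg hM hᵢⱼ, mul_nonneg (mul_nonneg hM hM) hᵢⱼ]

theorem single_le_sum_sublists {α : Type*} [DecidableEq α] {f : List α → ℝ} {L L' : List α}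
    (hf : ∀ L'' ∈ L.sublists, 0 ≤ f L'') (h : L'.Sublist L) :
    f L' ≤ ∑ L'' ∈ L.sublists.toFinset, f L'' :=
  Finset.single_le_sum (fun L'' h'' => hf L'' (List.mem_toFinset.1 h''))
    (List.mem_toFinset.2 (List.mem_sublists.2 h))

theorem abs_pdList_mul_stripCoord_pow_three_le {b u : (Fin 3 → ℝ) → ℝ} {κ M : ℝ}
    {S : List (Fin 3) → ℝ} {x : Fin 3 → ℝ} (hb : ContDiff ℝ 2 b) (hu : ContDiff ℝ 2 u)
    (hκ : 0 < κ) (hκ₁ : κ ≤ 1) (hbM : ∀ L : List (Fin 3), L.length ≤ 2 → |pdList L b x| ≤ M)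
    (huS : ∀ L : List (Fin 3), L.length ≤ 2 → |pdList L u x| ≤ S L) (hS₀ : S [] ≤ κ)
    (hS₁ : ∀ i, S [i] ≤ 1) (hx₁ : b x + u x - 6 * κ ≤ x 2) (hx₂ : x 2 ≤ b x + u x)
    {L : List (Fin 3)} (hL : L.length ≤ 2) :
    |pdList L (fun z => u z * stripCoord (fun z => b z + u z) (6 * κ) z ^ 3) x| ≤
      4 * (2 + M) ^ 2 * ∑ L' ∈ L.sublists.toFinset, S L' / κ ^ (L.length - L'.length) := by
  set q := stripCoord (fun z => b z + u z) (6 * κ)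
  have hk : 0 < 6 * κ := by positivity
  have hq : ContDiff ℝ 2 q := (hb.add hu).stripCoord
  have hqx : |q x| ≤ 1 := abs_stripCoord_le_one hk (by linarith) hx₂
  have hM : 0 ≤ M := (abs_nonneg _).trans (hbM [] (by simp))
  have hS {L' : List (Fin 3)} (h : L'.length ≤ 2) : 0 ≤ S L' := (abs_nonneg _).trans (huS L' h)
  have hsum {L' : List (Fin 3)} (h : L'.Sublist L) :
      S L' / κ ^ (L.length - L'.length) ≤
        ∑ L' ∈ L.sublists.toFinset, S L' / κ ^ (L.length - L'.length) :=
    single_le_sum_sublists (f := fun L' => S L' / κ ^ (L.length - L'.length))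
      (fun L'' h'' => div_nonneg (hS ((List.mem_sublists.1 h'').length_le.trans hL))
        (by positivity)) h
  have hdq₁ (i : Fin 3) : |pd3 i q x| ≤ (2 + M) / (6 * κ) :=
    abs_pd3_stripCoord_add_le hb hu hk (hbM [i] (by simp)) (huS [i] (by simp)) (hS₁ i)
  rcases L with _ | ⟨i, _ | ⟨j, _ | ⟨_, _⟩⟩⟩
  · calc |pdList [] (fun z => u z * q z ^ 3) x| = |q x ^ 3 * u x| := by rw [mul_comm]; rfl
      _ ≤ S [] := (abs_pow_mul_le_abs hqx 3 _).trans (huS [] (by simp))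
      _ ≤ 4 * (2 + M) ^ 2 * S [] := le_mul_of_one_le_left (hS (by simp)) (by nlinarith)
      _ = _ := by simp
  · set E := ∑ L' ∈ [i].sublists.toFinset, S L' / κ ^ ([i].length - L'.length)
    have h₀ : S [] / κ ≤ E := by simpa using hsum (List.nil_sublist _)
    have hᵢ : S [i] ≤ E := by simpa using hsum (List.Sublist.refl _)
    calc |pdList [i] (fun z => u z * q z ^ 3) x| ≤ 3 * |u x| * |pd3 i q x| + |pd3 i u x| :=
          abs_pd3_mul_pow_three_le (hu.differentiable (by simp)) (hq.differentiable (by simp))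
            hqx i
      _ ≤ (2 + M) ^ 2 * (S [] / κ + S [i]) :=
          first_order_le hκ hM (huS [] (by simp)) (huS [i] (by simp)) (hdq₁ i)
      _ ≤ (2 + M) ^ 2 * (E + E) := by gcongr
      _ ≤ 4 * (2 + M) ^ 2 * E := by nlinarith [hS (L' := [i]) (by simp)]
  · set E := ∑ L' ∈ [i, j].sublists.toFinset, S L' / κ ^ ([i, j].length - L'.length)
    have h₀ : S [] / κ ^ 2 ≤ E := by simpa using hsum (List.nil_sublist _)
    have hᵢ : S [i] / κ ≤ E := by simpa using hsum (L' := [i]) (by simp)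
    have hⱼ : S [j] / κ ≤ E := by simpa using hsum (L' := [j]) (by simp)
    have hᵢⱼ : S [i, j] ≤ E := by simpa using hsum (List.Sublist.refl _)
    calc |pdList [i, j] (fun z => u z * q z ^ 3) x| ≤
          3 * |u x| * |pd3 i (pd3 j q) x| + 6 * |u x| * |pd3 i q x| * |pd3 j q x| +
            3 * |pd3 i u x| * |pd3 j q x| + 3 * |pd3 j u x| * |pd3 i q x| +
            |pd3 i (pd3 j u) x| :=
          abs_pd3_pd3_mul_pow_three_le hu hq hqx i j
      _ ≤ (2 + M) ^ 2 * (S [] / κ ^ 2 + S [i] / κ + S [j] / κ + S [i, j]) :=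
          second_order_le hκ hκ₁ hM hS₀ (huS [] (by simp)) (huS [i] (by simp))
            (huS [j] (by simp)) (huS [i, j] (by simp)) (hdq₁ i) (hdq₁ j)
            (abs_pd3_pd3_stripCoord_add_le hb hu hk (hbM [i, j] (by simp))
              (huS [i, j] (by simp)))
      _ ≤ (2 + M) ^ 2 * (E + E + E + E) := by gcongr
      _ = 4 * (2 + M) ^ 2 * E := by ring
  · simp at hL

theorem abs_pdList_profile_le {W : Set (Fin 2 → ℝ)} (hW : Bornology.IsBounded W)
    {g φ : (Fin 2 → ℝ) → ℝ} (hg : ContDiff ℝ 2 g) (hφ : ContDiff ℝ 2 φ) {κ M : ℝ}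
    (hκ : 0 < κ) (hκ₁ : κ ≤ 1)
    (hgM : ∀ L : List (Fin 3), L.length ≤ 2 → ∀ x, proj2 x ∈ W →
      |pdList L (fun x => g (proj2 x)) x| ≤ M)
    (hφg : ∀ p ∈ W, |φ p - g p| < κ)
    (hS₁ : ∀ i, ⨆ p : W, |pdList [i] (fun y => φ (proj2 y) - g (proj2 y)) (lift2 p)| ≤ 1)
    {x : Fin 3 → ℝ} (hx : proj2 x ∈ W) (hx₁ : φ (proj2 x) - 6 * κ < x 2)
    (hx₂ : x 2 < φ (proj2 x)) {L : List (Fin 3)} (hL : L.length ≤ 2) :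
    |pdList L (fun z => (φ (proj2 z) - g (proj2 z)) *
        ((z 2 - (φ (proj2 z) - 6 * κ)) / (6 * κ)) ^ 3) x| ≤
      4 * (2 + M) ^ 2 * ∑ L' ∈ L.sublists.toFinset,
        (⨆ p : W, |pdList L' (fun y => φ (proj2 y) - g (proj2 y)) (lift2 p)|) /
          κ ^ (L.length - L'.length) := by
  have hφg' : ContDiff ℝ 2 (fun p => φ p - g p) := hφ.sub hg
  have hb : ContDiff ℝ 2 (fun z => g (proj2 z)) := hg.comp proj2L.contDiff
  have hu : ContDiff ℝ 2 (fun z => φ (proj2 z) - g (proj2 z)) := hφg'.comp proj2L.contDiff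
  have hS₀ : ⨆ p : W, |pdList [] (fun y => φ (proj2 y) - g (proj2 y)) (lift2 p)| ≤ κ :=
    Real.iSup_le (fun p => by simpa [pdList, proj2_lift2] using (hφg p p.2).le) hκ.le
  have hprofile : (fun z => (φ (proj2 z) - g (proj2 z)) *
      ((z 2 - (φ (proj2 z) - 6 * κ)) / (6 * κ)) ^ 3) = fun z => (φ (proj2 z) - g (proj2 z)) *
        stripCoord (fun z => g (proj2 z) + (φ (proj2 z) - g (proj2 z))) (6 * κ) z ^ 3 := by
    simp only [stripCoord, add_sub_cancel]
  rw [hprofile]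
  exact abs_pdList_mul_stripCoord_pow_three_le hb hu hκ hκ₁ (fun L hL => hgM L hL x hx)
    (fun L hL => abs_pdList_comp_proj2_le_iSup hW hφg' hL hx) hS₀ hS₁
    (by linarith) (by linarith) hL

theorem le_one_of_div_rpow_lt_one {s κ r : ℝ} (hκ : 0 < κ) (hκ₁ : κ ≤ 1) (hr : 0 ≤ r)
    (h : s / κ ^ r < 1) : s ≤ 1 :=
  ((div_lt_one (Real.rpow_pos_of_pos hκ r)).1 h).le.trans (Real.rpow_le_one hκ.le hκ₁ hr)

theorem sqrt_mul_div_pow_eq_div_rpow {κ : ℝ} (hκ : 0 < κ) (s : ℝ) {m : ℕ} (hm : m ≤ 2) :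
    √κ * (s / κ ^ (2 - m)) = s / κ ^ ((3 : ℝ) / 2 - m) := by
  have hpow : κ ^ (2 - m) = κ ^ ((3 : ℝ) / 2 - m) * √κ := by
    rw [Real.sqrt_eq_rpow, ← Real.rpow_add hκ, ← Real.rpow_natCast, Nat.cast_sub hm]
    ring_nf
  have : 0 < √κ := Real.sqrt_pos.2 hκ
  rw [hpow]
  field_simp

theorem tendsto_sqrt_mul_iSup_abs_nhdsGT {X : ℝ → Type*} {F : (ε : ℝ) → X ε → ℝ}
    {κ : ℝ → ℝ} {S : ℝ → List (Fin 3) → ℝ} {L : List (Fin 3)} {c ε₁ : ℝ} (hL : L.length = 2)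
    (hε₁ : 0 < ε₁) (hc : 0 ≤ c) (hκ : ∀ ε > 0, 0 < κ ε) (hS : ∀ ε L', 0 ≤ S ε L')
    (hF : ∀ ε, 0 < ε → ε < ε₁ → ∀ x, |F ε x| ≤
      c * ∑ L' ∈ L.sublists.toFinset, S ε L' / κ ε ^ (L.length - L'.length))
    (hrat : ∀ L' : List (Fin 3), L'.length ≤ 2 →
      Tendsto (fun ε => S ε L' / κ ε ^ ((3 : ℝ) / 2 - L'.length))
        (nhdsWithin 0 (Set.Ioi 0)) (nhds 0)) :
    Tendsto (fun ε => √(κ ε) * ⨆ x, |F ε x|) (nhdsWithin 0 (Set.Ioi 0)) (nhds 0) := by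
  have hlen : ∀ L' ∈ L.sublists.toFinset, L'.length ≤ 2 := fun L' h =>
    hL ▸ (List.mem_sublists.1 (List.mem_toFinset.1 h)).length_le
  have hlim : Tendsto (fun ε => c * ∑ L' ∈ L.sublists.toFinset,
      S ε L' / κ ε ^ ((3 : ℝ) / 2 - L'.length)) (nhdsWithin 0 (Set.Ioi 0)) (nhds 0) := by
    simpa using (tendsto_finsetSum _ fun L' h => hrat L' (hlen L' h)).const_mul c
  refine squeeze_zero' (Eventually.of_forall fun ε => mul_nonneg (Real.sqrt_nonneg _)
    (Real.iSup_nonneg fun _ => abs_nonneg _)) ?_ hlim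
  filter_upwards [Ioo_mem_nhdsGT hε₁] with ε ⟨hε, hεε₁⟩
  have hsum : 0 ≤ ∑ L' ∈ L.sublists.toFinset, S ε L' / κ ε ^ (L.length - L'.length) :=
    Finset.sum_nonneg fun L' _ => div_nonneg (hS ε L') (pow_nonneg (hκ ε hε).le _)
  calc √(κ ε) * ⨆ x, |F ε x| ≤
        √(κ ε) * (c * ∑ L' ∈ L.sublists.toFinset, S ε L' / κ ε ^ (L.length - L'.length)) := by
        gcongr
        exact Real.iSup_le (hF ε hε hεε₁) (mul_nonneg hc hsum)
    _ = _ := by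
      rw [mul_left_comm, Finset.mul_sum]
      congr 1
      refine Finset.sum_congr rfl fun L' h => ?_
      rw [hL, sqrt_mul_div_pow_eq_div_rpow (hκ ε hε) _ (hlen L' h)]

theorem stmt15_general (W : Set (Fin 2 → ℝ)) (hWb : Bornology.IsBounded W)
    (g : (Fin 2 → ℝ) → ℝ) (gε : ℝ → (Fin 2 → ℝ) → ℝ) (κ : ℝ → ℝ)
    (hg : ContDiff ℝ 2 g) (hgε : ∀ ε > (0:ℝ), ContDiff ℝ 2 (gε ε))
    (hκpos : ∀ ε > (0:ℝ), 0 < κ ε)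
    (hκ0 : Tendsto κ (nhdsWithin 0 (Set.Ioi 0)) (nhds 0))
    (hκgt : ∀ ε > (0:ℝ), ∀ p ∈ W, |gε ε p - g p| < κ ε)
    (hrat : ∀ L : List (Fin 3), L.length ≤ 2 →
      Tendsto (fun ε =>
          (⨆ p : W, |pdList L (fun x => gε ε (proj2 x) - g (proj2 x)) (lift2 p)|) /
            κ ε ^ ((3:ℝ) / 2 - L.length))
        (nhdsWithin 0 (Set.Ioi 0)) (nhds 0))
    (h : ℝ → (Fin 3 → ℝ) → ℝ)
    (hdef : ∀ ε > (0:ℝ), ∀ x : Fin 3 → ℝ,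
      h ε x = (gε ε (proj2 x) - g (proj2 x)) *
        ((x 2 - (gε ε (proj2 x) - 6 * κ ε)) / (6 * κ ε)) ^ 3) :
    (∃ c : ℝ, 0 < c ∧ ∃ ε₁ : ℝ, 0 < ε₁ ∧ ∀ ε : ℝ, 0 < ε → ε < ε₁ →
      ∀ L : List (Fin 3), L.length ≤ 2 →
        ∀ x : Fin 3 → ℝ, proj2 x ∈ W →
          gε ε (proj2 x) - 6 * κ ε < x 2 → x 2 < gε ε (proj2 x) →
          |pdList L (h ε) x| ≤
            c * ∑ L' ∈ L.sublists.toFinset,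
              (⨆ p : W, |pdList L' (fun y => gε ε (proj2 y) - g (proj2 y)) (lift2 p)|) /
                κ ε ^ (L.length - L'.length)) ∧
      ∀ L : List (Fin 3), L.length = 2 →
        Tendsto (fun ε => Real.sqrt (κ ε) *
            ⨆ x : {y : Fin 3 → ℝ // proj2 y ∈ W ∧
                gε ε (proj2 y) - 6 * κ ε < y 2 ∧ y 2 < gε ε (proj2 y)},
              |pdList L (h ε) x|)
          (nhdsWithin 0 (Set.Ioi 0)) (nhds 0) := by
  obtain ⟨M, hM, hgM⟩ := exists_forall_abs_pdList_comp_proj2_le hWb hg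
  have hsmall : ∀ᶠ ε in nhdsWithin 0 (Set.Ioi 0), κ ε ≤ 1 ∧ ∀ i : Fin 3,
      ⨆ p : W, |pdList [i] (fun y => gε ε (proj2 y) - g (proj2 y)) (lift2 p)| ≤ 1 := by
    filter_upwards [hκ0.eventually_lt_const one_pos, self_mem_nhdsWithin,
      eventually_all.2 fun i => (hrat [i] (by simp)).eventually_lt_const one_pos]
      with ε hκ₁ hε hS₁
    exact ⟨hκ₁.le, fun i => le_one_of_div_rpow_lt_one (hκpos ε hε) hκ₁.le (by norm_num) (hS₁ i)⟩
  obtain ⟨ε₁, hε₁, hsub⟩ := mem_nhdsGT_iff_exists_Ioo_subset.1 hsmall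
  have hbound (ε : ℝ) (hε : 0 < ε) (hεε₁ : ε < ε₁) (L : List (Fin 3)) (hL : L.length ≤ 2)
      (x : Fin 3 → ℝ) (hx : proj2 x ∈ W) (hx₁ : gε ε (proj2 x) - 6 * κ ε < x 2)
      (hx₂ : x 2 < gε ε (proj2 x)) :
      |pdList L (h ε) x| ≤ 4 * (2 + M) ^ 2 * ∑ L' ∈ L.sublists.toFinset,
        (⨆ p : W, |pdList L' (fun y => gε ε (proj2 y) - g (proj2 y)) (lift2 p)|) /
          κ ε ^ (L.length - L'.length) := by
    rw [funext (hdef ε hε)]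
    exact abs_pdList_profile_le hWb hg (hgε ε hε) (hκpos ε hε) (hsub ⟨hε, hεε₁⟩).1 hgM
      (hκgt ε hε) (hsub ⟨hε, hεε₁⟩).2 hx hx₁ hx₂ hL
  refine ⟨⟨4 * (2 + M) ^ 2, by positivity, ε₁, hε₁, hbound⟩, fun L hL => ?_⟩
  exact tendsto_sqrt_mul_iSup_abs_nhdsGT hL hε₁ (by positivity) hκpos
    (fun ε L' => Real.iSup_nonneg fun _ => abs_nonneg _)
    (fun ε hε hεε₁ x => hbound ε hε hεε₁ L hL.le x x.2.1 x.2.2.1 x.2.2.2) hrat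

/-- Leibniz-rule estimates for the profile functions
`h_ε(x̄, x₃) = (g_ε(x̄) - g(x̄)) ((x₃ - ĝ_ε(x̄))/(6κ_ε))³`, `ĝ_ε = g_ε - 6κ_ε`, under the
convergence assumptions `κ_ε → 0`, `κ_ε > ‖g_ε - g‖_∞` and
`‖D^β(g_ε - g)‖_∞ / κ_ε^{3/2 - |β|} → 0` for `|β| ≤ 2`:  every derivative `D^α h_ε` of
order `|α| ≤ 2` is bounded on the strip by
`c Σ_{γ ≤ α} ‖D^γ(g_ε - g)‖_∞ / κ_ε^{|α|-|γ|}` with `c` independent of `ε`; in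
particular every second-order derivative of `h_ε` is `o(κ_ε^{-1/2})` as `ε → 0`. -/
theorem stmt15 (W : Set (Fin 2 → ℝ)) (hWo : IsOpen W) (hWb : Bornology.IsBounded W)
    (g : (Fin 2 → ℝ) → ℝ) (gε : ℝ → (Fin 2 → ℝ) → ℝ) (κ : ℝ → ℝ)
    (hg : ContDiff ℝ 2 g) (hgε : ∀ ε > (0:ℝ), ContDiff ℝ 2 (gε ε))
    (hκpos : ∀ ε > (0:ℝ), 0 < κ ε)
    (hκ0 : Tendsto κ (nhdsWithin 0 (Set.Ioi 0)) (nhds 0))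
    (hκgt : ∀ ε > (0:ℝ), ∀ p ∈ W, |gε ε p - g p| < κ ε)
    (hrat : ∀ L : List (Fin 3), L.length ≤ 2 →
      Tendsto (fun ε =>
          (⨆ p : W, |pdList L (fun x => gε ε (proj2 x) - g (proj2 x)) (lift2 p)|) /
            κ ε ^ ((3:ℝ) / 2 - L.length))
        (nhdsWithin 0 (Set.Ioi 0)) (nhds 0))
    (h : ℝ → (Fin 3 → ℝ) → ℝ)
    (hdef : ∀ ε > (0:ℝ), ∀ x : Fin 3 → ℝ,
      h ε x = (gε ε (proj2 x) - g (proj2 x)) *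
        ((x 2 - (gε ε (proj2 x) - 6 * κ ε)) / (6 * κ ε)) ^ 3) :
    (∃ c : ℝ, 0 < c ∧ ∃ ε₁ : ℝ, 0 < ε₁ ∧ ∀ ε : ℝ, 0 < ε → ε < ε₁ →
      ∀ L : List (Fin 3), L.length ≤ 2 →
        ∀ x : Fin 3 → ℝ, proj2 x ∈ W →
          gε ε (proj2 x) - 6 * κ ε < x 2 → x 2 < gε ε (proj2 x) →
          |pdList L (h ε) x| ≤
            c * ∑ L' ∈ L.sublists.toFinset,
              (⨆ p : W, |pdList L' (fun y => gε ε (proj2 y) - g (proj2 y)) (lift2 p)|) /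
                κ ε ^ (L.length - L'.length)) ∧
      ∀ L : List (Fin 3), L.length = 2 →
        Tendsto (fun ε => Real.sqrt (κ ε) *
            ⨆ x : {y : Fin 3 → ℝ // proj2 y ∈ W ∧
                gε ε (proj2 y) - 6 * κ ε < y 2 ∧ y 2 < gε ε (proj2 y)},
              |pdList L (h ε) x|)
          (nhdsWithin 0 (Set.Ioi 0)) (nhds 0) :=
  stmt15_general W hWb g gε κ hg hgε hκpos hκ0 hκgt hrat h hdef
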